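/- Let E be a finite set, S a Markov transition kernel on E with invariant probability measure ν, and for ξ ∈ E let P_ξ (with expectation E_ξ) denote the law of the canonical Markov chain (ξ_k)_{k≥0} with kernel S started at ξ. Let τ be a stopping time of the chain with 1 ≤ τ < ∞ P_ξ-a.s. for every ξ, and define the iterates τ₀ := 0 and τ_{m+1} := τ_m + τ∘Θ_{τ_m}, where Θ is the shift on path space. Let ρ ∈ (0,1) and suppose max_{ξ∈E} E_ξ[ρ^τ] ≤ 1/2. Then for every function g : E → [0,∞): (1−ρ)^{-1} ∫ g dν ≤ max_{ξ∈E} E_ξ[ ∑_{k=0}^∞ ρ^k g(ξ_k) ] ≤ 2 max_{ξ∈E} E_ξ[ ∑_{k=0}^{τ−1} g(ξ_k) ]. -/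

import Mathlib

open MeasureTheory

namespace ResolventBound

/-- The shift `Θ_k` on path space. -/
def shiftPath {E : Type*} (k : ℕ) (X : ℕ → E) : ℕ → E := fun n => X (n + k)

/-- The iterates `τ₀ = 0`, `τ_{m+1} = τ_m + τ ∘ Θ_{τ_m}` of a stopping time `τ`. -/
def tauIter {E : Type*} (τ : (ℕ → E) → ℕ) : ℕ → (ℕ → E) → ℕ
  | 0, _ => 0
  | m + 1, X => tauIter τ m X + τ (shiftPath (tauIter τ m X) X)

/-!
Everything runs through the resolvent `R g = ∑ₖ ρᵏ Sᵏ g`, which by the Markov property is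
`ξ ↦ E_ξ[∑ₖ ρᵏ g(ξₖ)]`. Invariance gives `∫ Sᵏ g dν = ∫ g dν`, hence `∫ R g dν = (1-ρ)⁻¹ ∫ g dν`,
and an average is at most the maximum. For the second inequality cut the discounted sum at `τ`:
the part before `τ` is at most `∑_{k<τ} g(ξₖ)`, and by the strong Markov property the part after
has expectation `E_ξ[ρ^τ R g(ξ_τ)] ≤ (max R g) / 2`. At a point where `R g` is maximal this reads
`max R g ≤ max_ξ E_ξ[∑_{k<τ} g(ξₖ)] + (max R g) / 2`.
-/

open Finset Matrix

section Integral

variable {Ω : Type*} [MeasurableSpace Ω] {μ : Measure Ω} {ρ C : ℝ}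

lemma summable_pow_mul_of_abs_le (hρ0 : 0 ≤ ρ) (hρ1 : ρ < 1) {f : ℕ → ℝ}
    (hf : ∀ k, |f k| ≤ C) : Summable fun k => ρ ^ k * f k :=
  (summable_geometric_of_lt_one hρ0 hρ1).mul_right C |>.of_norm_bounded fun k => by
    rw [Real.norm_eq_abs, abs_mul, abs_of_nonneg (pow_nonneg hρ0 k)]
    exact mul_le_mul_of_nonneg_left (hf k) (pow_nonneg hρ0 k)

lemma tsum_pow_mul_eq_sum_range_add (hρ0 : 0 ≤ ρ) (hρ1 : ρ < 1) {f : ℕ → ℝ}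
    (hf : ∀ k, |f k| ≤ C) (n : ℕ) :
    ∑' k, ρ ^ k * f k = ∑ k ∈ range n, ρ ^ k * f k + ρ ^ n * ∑' j, ρ ^ j * f (n + j) := by
  rw [← (summable_pow_mul_of_abs_le hρ0 hρ1 hf).sum_add_tsum_nat_add n, ← tsum_mul_left]
  congr 1
  exact tsum_congr fun j => by rw [add_comm j n, pow_add]; ring

lemma integral_eq_sum_ite_of_le {τ : Ω → ℕ} {N : ℕ} (hN : ∀ ω, τ ω ≤ N) {Φ : ℕ → Ω → ℝ}
    (hΦ : ∀ n, Integrable (fun ω => if τ ω = n then Φ n ω else 0) μ) :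
    ∫ ω, Φ (τ ω) ω ∂μ = ∑ n ∈ range (N + 1), ∫ ω, (if τ ω = n then Φ n ω else 0) ∂μ := by
  rw [← integral_finsetSum _ fun n _ => hΦ n]
  congr 1 with ω
  rw [Finset.sum_ite_eq, if_pos (mem_range.2 (Nat.lt_succ_of_le (hN ω)))]

variable [IsFiniteMeasure μ] {F : ℕ → Ω → ℝ}

lemma integrable_tsum_pow_mul (hρ0 : 0 ≤ ρ) (hρ1 : ρ < 1)
    (hF : ∀ k, AEStronglyMeasurable (F k) μ) (hC : ∀ k ω, |F k ω| ≤ C) :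
    Integrable (fun ω => ∑' k, ρ ^ k * F k ω) μ := by
  refine .of_bound (C := ∑' k, ρ ^ k * C) ?_ (ae_of_all _ fun ω => ?_)
  · refine aestronglyMeasurable_of_tendsto_ae Filter.atTop
      (fun n => Finset.aestronglyMeasurable_sum (range n) fun k _ => (hF k).const_mul (ρ ^ k))
      (ae_of_all _ fun ω => ?_)
    simpa only [Finset.sum_apply] using
      (summable_pow_mul_of_abs_le hρ0 hρ1 (hC · ω)).hasSum.tendsto_sum_nat
  · have hsum := summable_pow_mul_of_abs_le hρ0 hρ1 (hC · ω)
    refine (norm_tsum_le_tsum_norm hsum.norm).trans (hsum.norm.tsum_le_tsum (fun k => ?_) ?_)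
    · rw [Real.norm_eq_abs, abs_mul, abs_of_nonneg (pow_nonneg hρ0 k)]
      exact mul_le_mul_of_nonneg_left (hC k ω) (pow_nonneg hρ0 k)
    · exact (summable_geometric_of_lt_one hρ0 hρ1).mul_right C

lemma integral_tsum_pow_mul (hρ0 : 0 ≤ ρ) (hρ1 : ρ < 1)
    (hF : ∀ k, AEStronglyMeasurable (F k) μ) (hC : ∀ k ω, |F k ω| ≤ C) :
    ∫ ω, ∑' k, ρ ^ k * F k ω ∂μ = ∑' k, ρ ^ k * ∫ ω, F k ω ∂μ := by
  have hint : ∀ k, Integrable (F k) μ := fun k =>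
    .of_bound (hF k) C (ae_of_all _ fun ω => (Real.norm_eq_abs _).trans_le (hC k ω))
  have hnorm : ∀ k, ∫ ω, ‖ρ ^ k * F k ω‖ ∂μ = ρ ^ k * ∫ ω, ‖F k ω‖ ∂μ := fun k => by
    simp_rw [norm_mul, norm_pow, Real.norm_of_nonneg hρ0]
    exact integral_const_mul _ _
  have hbound : ∀ k, |∫ ω, ‖F k ω‖ ∂μ| ≤ C * μ.real Set.univ := fun k => by
    rw [← Real.norm_eq_abs]
    exact norm_integral_le_of_norm_le_const
      (ae_of_all _ fun ω => by rw [norm_norm, Real.norm_eq_abs]; exact hC k ω)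
  rw [← integral_tsum_of_summable_integral_norm (fun k => (hint k).const_mul (ρ ^ k))]
  · exact tsum_congr fun k => integral_const_mul _ _
  · simpa only [hnorm] using summable_pow_mul_of_abs_le hρ0 hρ1 hbound

end Integral

lemma dotProduct_pow_mulVec {ι : Type*} [Fintype ι] [DecidableEq ι] {M : Matrix ι ι ℝ}
    {ν : ι → ℝ} (hinv : ∀ v, ν ⬝ᵥ (M *ᵥ v) = ν ⬝ᵥ v) (j : ℕ) (v : ι → ℝ) :
    ν ⬝ᵥ (M ^ j *ᵥ v) = ν ⬝ᵥ v := by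
  induction j generalizing v with
  | zero => simp
  | succ j ih => rw [pow_succ, ← mulVec_mulVec, ih, hinv]

lemma dotProduct_tsum_pow_mulVec {ι : Type*} [Fintype ι] [DecidableEq ι] {M : Matrix ι ι ℝ}
    {ν : ι → ℝ} (hinv : ∀ v, ν ⬝ᵥ (M *ᵥ v) = ν ⬝ᵥ v) {ρ C : ℝ} (hρ0 : 0 ≤ ρ) (hρ1 : ρ < 1)
    {v : ι → ℝ} (hC : ∀ j a, |(M ^ j *ᵥ v) a| ≤ C) :
    ν ⬝ᵥ (fun a => ∑' j, ρ ^ j * (M ^ j *ᵥ v) a) = (1 - ρ)⁻¹ * ν ⬝ᵥ v := by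
  calc ν ⬝ᵥ (fun a => ∑' j, ρ ^ j * (M ^ j *ᵥ v) a)
      = ∑' j, ρ ^ j * ν ⬝ᵥ (M ^ j *ᵥ v) := by
        simp only [dotProduct, ← tsum_mul_left]
        rw [← Summable.tsum_finsetSum fun a _ =>
          (summable_pow_mul_of_abs_le hρ0 hρ1 (hC · a)).mul_left (ν a)]
        exact tsum_congr fun j => by rw [Finset.mul_sum]; exact sum_congr rfl fun a _ => by ring
    _ = (∑' j, ρ ^ j) * ν ⬝ᵥ v := by simp_rw [dotProduct_pow_mulVec hinv, tsum_mul_right]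
    _ = (1 - ρ)⁻¹ * ν ⬝ᵥ v := by rw [tsum_geometric_of_lt_one hρ0 hρ1]

lemma sum_mul_le_sup' {ι : Type*} [Fintype ι] [Nonempty ι] {ν : ι → ℝ} (hν0 : ∀ a, 0 ≤ ν a)
    (hν1 : ∑ a, ν a = 1) (f : ι → ℝ) : ∑ a, ν a * f a ≤ univ.sup' univ_nonempty f :=
  calc ∑ a, ν a * f a ≤ ∑ a, ν a * univ.sup' univ_nonempty f :=
        sum_le_sum fun a _ => mul_le_mul_of_nonneg_left (le_sup' f (mem_univ a)) (hν0 a)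
    _ = univ.sup' univ_nonempty f := by rw [← Finset.sum_mul, hν1, one_mul]

section Paths

variable {E : Type*}

def truncate (n : ℕ) (X : ℕ → E) : Fin (n + 1) → E := fun i => X i

lemma _root_.DependsOn.exists_eq_comp_truncate {β : Type*} {ψ : (ℕ → E) → β} {n : ℕ}
    (hψ : DependsOn ψ (Set.Iic n)) : ∃ f : (Fin (n + 1) → E) → β, ∀ X, ψ X = f (truncate n X) :=
  ⟨fun xs => ψ fun i => xs (Fin.clamp i n), fun X =>
    hψ fun i hi => by simp [truncate, Fin.clamp, min_eq_left (Set.mem_Iic.1 hi)]⟩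

lemma dependsOn_mul_apply {ψ : (ℕ → E) → ℝ} {n m : ℕ} (hψ : DependsOn ψ (Set.Iic n))
    (h : E → ℝ) (hm : n ≤ m) : DependsOn (fun X => ψ X * h (X m)) (Set.Iic m) := fun _ _ hXY =>
  congrArg₂ (· * ·) (hψ fun i hi => hXY i (le_trans hi hm))
    (congrArg h (hXY m (Set.mem_Iic.2 le_rfl)))

lemma dependsOn_const_mul_apply (c : ℝ) (h : E → ℝ) {m n : ℕ} (hm : m ≤ n) :
    DependsOn (fun X : ℕ → E => c * h (X m)) (Set.Iic n) := fun _ _ hXY =>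
  congrArg (c * h ·) (hXY m hm)

lemma dependsOn_sum_range_apply (f : ℕ → E → ℝ) (n : ℕ) :
    DependsOn (fun X : ℕ → E => ∑ k ∈ range n, f k (X k)) (Set.Iic n) := fun _ _ hXY =>
  sum_congr rfl fun k hk => congrArg (f k) (hXY k (Set.mem_Iic.2 (mem_range.1 hk).le))

def IsPathStoppingTime (τ : (ℕ → E) → ℕ) : Prop :=
  ∀ (X Y : ℕ → E) (n : ℕ), τ X = n → (∀ i ≤ n, X i = Y i) → τ Y = n

namespace IsPathStoppingTime

variable {τ : (ℕ → E) → ℕ} (hτ : IsPathStoppingTime τ)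
include hτ

lemma dependsOn_ite (n : ℕ) (c : ℝ) :
    DependsOn (fun X => if τ X = n then c else 0) (Set.Iic n) := fun X Y hXY => by
  have : τ X = n ↔ τ Y = n :=
    ⟨fun h => hτ X Y n h hXY, fun h => hτ Y X n h fun i hi => (hXY i hi).symm⟩
  simp only [this]

lemma dependsOn_comp {β : Type*} {N j : ℕ} (hN : ∀ X, τ X ≤ N) {Φ : ℕ → (ℕ → E) → β}
    (hΦ : ∀ n, DependsOn (Φ n) (Set.Iic (n + j))) :
    DependsOn (fun X => Φ (τ X) X) (Set.Iic (N + j)) := fun X Y hXY => by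
  have hle : ∀ i ≤ τ X + j, X i = Y i := fun i hi => hXY i (hi.trans (by have := hN X; omega))
  have hτY : τ Y = τ X := hτ X Y _ rfl fun i hi => hle i (by omega)
  simp only [hτY]
  exact hΦ _ hle

/-- Each `{τ = n}` is open in the compact space of paths, so `τ` takes finitely many values. -/
lemma exists_forall_le [Finite E] : ∃ N, ∀ X, τ X ≤ N := by
  let : TopologicalSpace E := ⊥
  have : DiscreteTopology E := ⟨rfl⟩
  have hcont : Continuous τ := continuous_discrete_rng.2 fun n => by
    refine isOpen_iff_forall_mem_open.2 fun X hX =>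
      ⟨⋂ i ∈ range (n + 1), (fun Y : ℕ → E => Y i) ⁻¹' {X i}, fun Y hY => ?_,
        isOpen_biInter_finset fun i _ => (isOpen_discrete _).preimage (continuous_apply i), by simp⟩
    simp only [Set.mem_iInter, Set.mem_preimage, Set.mem_singleton_iff, mem_range] at hY
    exact hτ X Y n hX fun i hi => (hY i (Nat.lt_succ_of_le hi)).symm
  obtain ⟨N, hN⟩ := (isCompact_range hcont).finite_of_discrete.bddAbove
  exact ⟨N, fun X => hN (Set.mem_range_self X)⟩

end IsPathStoppingTime

lemma measurable_truncate [MeasurableSpace E] (n : ℕ) : Measurable (truncate (E := E) n) :=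
  measurable_pi_lambda _ fun _ => measurable_pi_apply _

variable [Finite E] [MeasurableSpace E] [MeasurableSingletonClass E]

lemma _root_.DependsOn.measurable {ψ : (ℕ → E) → ℝ} {n : ℕ} (hψ : DependsOn ψ (Set.Iic n)) :
    Measurable ψ := by
  obtain ⟨f, hf⟩ := hψ.exists_eq_comp_truncate
  rw [funext hf]
  exact (measurable_of_finite f).comp (measurable_truncate n)

lemma _root_.DependsOn.integrable {ψ : (ℕ → E) → ℝ} {n : ℕ} (hψ : DependsOn ψ (Set.Iic n))
    {μ : Measure (ℕ → E)} [IsFiniteMeasure μ] : Integrable ψ μ := by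
  obtain ⟨f, hf⟩ := hψ.exists_eq_comp_truncate
  obtain ⟨C, hC⟩ := Finite.exists_le fun xs => ‖f xs‖
  exact .of_bound hψ.measurable.aestronglyMeasurable C (ae_of_all _ fun X => hf X ▸ hC _)

end Paths

section Chain

variable {E : Type*} [DecidableEq E]

def pathWeight (S : E → E → ℝ) (ξ : E) {m : ℕ} (xs : Fin (m + 1) → E) : ℝ :=
  (if xs 0 = ξ then 1 else 0) * ∏ i : Fin m, S (xs i.castSucc) (xs i.succ)

lemma pathWeight_nonneg {S : E → E → ℝ} (hS0 : ∀ a b, 0 ≤ S a b) (ξ : E) {m : ℕ}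
    (xs : Fin (m + 1) → E) : 0 ≤ pathWeight S ξ xs :=
  mul_nonneg (by split_ifs <;> norm_num) (prod_nonneg fun _ _ => hS0 _ _)

lemma pathWeight_snoc (S : E → E → ℝ) (ξ : E) {m : ℕ} (xs : Fin (m + 1) → E) (b : E) :
    pathWeight S ξ (Fin.snoc xs b : Fin (m + 1 + 1) → E) =
      pathWeight S ξ xs * S (xs (Fin.last m)) b := by
  simp only [pathWeight, Fin.prod_univ_castSucc, Fin.snoc_castSucc, Fin.succ_castSucc,
    Fin.succ_last, Fin.snoc_last, mul_assoc]
  rfl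

def IsChainLaw [MeasurableSpace E] (S : E → E → ℝ) (P : E → Measure (ℕ → E)) : Prop :=
  ∀ (ξ : E) (m : ℕ) (xs : Fin (m + 1) → E),
    P ξ {X | ∀ i : Fin (m + 1), X i = xs i} = ENNReal.ofReal (pathWeight S ξ xs)

variable [Fintype E]

noncomputable def resolvent (S : E → E → ℝ) (ρ : ℝ) (h : E → ℝ) (a : E) : ℝ :=
  ∑' j, ρ ^ j * ((of S) ^ j *ᵥ h) a

variable [MeasurableSpace E] [MeasurableSingletonClass E] {S : E → E → ℝ}
  {P : E → Measure (ℕ → E)} [∀ ξ, IsProbabilityMeasure (P ξ)]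

namespace IsChainLaw

variable (hP : IsChainLaw S P) (hS0 : ∀ a b, 0 ≤ S a b)
include hP hS0

lemma integral_comp_truncate (ξ : E) {n : ℕ} (f : (Fin (n + 1) → E) → ℝ) :
    ∫ X, f (truncate n X) ∂P ξ = ∑ xs, pathWeight S ξ xs * f xs := by
  rw [← integral_map (measurable_truncate n).aemeasurable
    (measurable_of_finite f).aestronglyMeasurable, integral_fintype .of_finite]
  refine sum_congr rfl fun xs _ => ?_
  have hcyl : truncate n ⁻¹' {xs} = {X | ∀ i : Fin (n + 1), X i = xs i} := by
    ext X
    simp [truncate, funext_iff]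
  rw [measureReal_def, Measure.map_apply (measurable_truncate n) (measurableSet_singleton xs),
    hcyl, hP, ENNReal.toReal_ofReal (pathWeight_nonneg hS0 ξ xs), smul_eq_mul]

lemma integral_apply_zero (ξ : E) (h : E → ℝ) : ∫ X, h (X 0) ∂P ξ = h ξ := by
  rw [show (fun X : ℕ → E => h (X 0)) = fun X => h (truncate 0 X 0) from rfl,
    hP.integral_comp_truncate hS0 ξ fun xs => h (xs 0),
    ← (Equiv.funUnique (Fin 1) E).symm.sum_comp]
  simp [pathWeight]

lemma integral_mul_apply_succ (ξ : E) {ψ : (ℕ → E) → ℝ} {n : ℕ} (hψ : DependsOn ψ (Set.Iic n))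
    (h : E → ℝ) : ∫ X, ψ X * h (X (n + 1)) ∂P ξ = ∫ X, ψ X * (of S *ᵥ h) (X n) ∂P ξ := by
  obtain ⟨f, hf⟩ := hψ.exists_eq_comp_truncate
  calc ∫ X, ψ X * h (X (n + 1)) ∂P ξ
      = ∫ X, (fun xs : Fin (n + 1 + 1) → E => f (Fin.init xs) * h (xs (Fin.last _)))
          (truncate (n + 1) X) ∂P ξ := by simp_rw [hf]; rfl
    _ = ∑ xs : Fin (n + 1 + 1) → E,
          pathWeight S ξ xs * (f (Fin.init xs) * h (xs (Fin.last _))) :=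
        hP.integral_comp_truncate hS0 ξ (n := n + 1) fun xs =>
          f (Fin.init xs) * h (xs (Fin.last _))
    _ = ∑ ys : Fin (n + 1) → E, ∑ b,
          pathWeight S ξ (Fin.snoc ys b : Fin (n + 1 + 1) → E) * (f ys * h b) := by
        rw [← (Fin.snocEquiv fun _ => E).sum_comp, Fintype.sum_prod_type, Finset.sum_comm]
        simp [Fin.snocEquiv]
    _ = ∑ ys, pathWeight S ξ ys * (f ys * (of S *ᵥ h) (ys (Fin.last n))) := by
        simp only [pathWeight_snoc, mulVec, dotProduct, of_apply, Finset.mul_sum]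
        exact sum_congr rfl fun ys _ => sum_congr rfl fun b _ => by ring
    _ = ∫ X, ψ X * (of S *ᵥ h) (X n) ∂P ξ := by
        rw [← hP.integral_comp_truncate hS0 ξ fun ys => f ys * (of S *ᵥ h) (ys (Fin.last n))]
        simp_rw [hf]
        rfl

lemma integral_mul_apply_add (ξ : E) {ψ : (ℕ → E) → ℝ} {n : ℕ} (hψ : DependsOn ψ (Set.Iic n))
    (h : E → ℝ) (j : ℕ) :
    ∫ X, ψ X * h (X (n + j)) ∂P ξ = ∫ X, ψ X * ((of S) ^ j *ᵥ h) (X n) ∂P ξ := by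
  induction j generalizing h with
  | zero => simp
  | succ j ih =>
    rw [← add_assoc,
      hP.integral_mul_apply_succ hS0 ξ (hψ.mono (Set.Iic_subset_Iic.2 (n.le_add_right j))), ih,
      pow_succ, ← mulVec_mulVec]

lemma integral_apply (a : E) (h : E → ℝ) (j : ℕ) :
    ∫ X, h (X j) ∂P a = ((of S) ^ j *ᵥ h) a := by
  simpa [hP.integral_apply_zero hS0] using hP.integral_mul_apply_add hS0 a
    ((dependsOn_const (1 : ℝ)).mono (Set.empty_subset (Set.Iic 0))) h j

lemma abs_pow_mulVec_le {h : E → ℝ} {C : ℝ} (hC : ∀ a, |h a| ≤ C) (j : ℕ) (a : E) :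
    |((of S) ^ j *ᵥ h) a| ≤ C := by
  rw [← hP.integral_apply hS0, ← Real.norm_eq_abs]
  simpa using norm_integral_le_of_norm_le_const (μ := P a)
    (ae_of_all _ fun X => (Real.norm_eq_abs _).trans_le (hC (X j)))

lemma integral_tsum_pow_mul_apply {ρ : ℝ} (hρ0 : 0 ≤ ρ) (hρ1 : ρ < 1) (h : E → ℝ) (a : E) :
    ∫ X, ∑' k, ρ ^ k * h (X k) ∂P a = resolvent S ρ h a := by
  obtain ⟨C, hC⟩ := Finite.exists_le fun b => |h b|
  rw [integral_tsum_pow_mul (μ := P a) (F := fun k (X : ℕ → E) => h (X k)) hρ0 hρ1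
    (fun k => ((measurable_of_finite h).comp (measurable_pi_apply k)).aestronglyMeasurable)
    fun k X => hC (X k)]
  simp_rw [hP.integral_apply hS0]
  rfl

lemma dotProduct_resolvent {ν : E → ℝ} (hinv : ∀ v, ν ⬝ᵥ (of S *ᵥ v) = ν ⬝ᵥ v) {ρ : ℝ}
    (hρ0 : 0 ≤ ρ) (hρ1 : ρ < 1) (h : E → ℝ) :
    ν ⬝ᵥ resolvent S ρ h = (1 - ρ)⁻¹ * ν ⬝ᵥ h := by
  obtain ⟨C, hC⟩ := Finite.exists_le fun b => |h b|
  exact dotProduct_tsum_pow_mulVec hinv hρ0 hρ1 (hP.abs_pow_mulVec_le hS0 hC)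

variable {τ : (ℕ → E) → ℕ} (hτ : IsPathStoppingTime τ)
include hτ

lemma integral_stopped_mul_apply_add (ξ : E) (c : ℕ → ℝ) (h : E → ℝ) (j : ℕ) :
    ∫ X, c (τ X) * h (X (τ X + j)) ∂P ξ = ∫ X, c (τ X) * ((of S) ^ j *ᵥ h) (X (τ X)) ∂P ξ := by
  obtain ⟨N, hN⟩ := hτ.exists_forall_le
  have hint : ∀ n m (f : E → ℝ), n ≤ m →
      Integrable (fun X => if τ X = n then c n * f (X m) else 0) (P ξ) := fun n m f hm => by
    simp_rw [← ite_zero_mul]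
    exact (dependsOn_mul_apply (hτ.dependsOn_ite n (c n)) f hm).integrable
  rw [integral_eq_sum_ite_of_le hN (Φ := fun n X => c n * h (X (n + j)))
      fun n => hint n _ h (n.le_add_right j),
    integral_eq_sum_ite_of_le hN (Φ := fun n X => c n * ((of S) ^ j *ᵥ h) (X n))
      fun n => hint n n _ le_rfl]
  refine sum_congr rfl fun n _ => ?_
  simp_rw [← ite_zero_mul]
  exact hP.integral_mul_apply_add hS0 ξ (hτ.dependsOn_ite n (c n)) h j

lemma integral_stopped_tsum {ρ : ℝ} (hρ0 : 0 ≤ ρ) (hρ1 : ρ < 1) (ξ : E) (h : E → ℝ) :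
    ∫ X, ρ ^ τ X * ∑' j, ρ ^ j * h (X (τ X + j)) ∂P ξ =
      ∫ X, ρ ^ τ X * resolvent S ρ h (X (τ X)) ∂P ξ := by
  obtain ⟨N, hN⟩ := hτ.exists_forall_le
  obtain ⟨C, hC⟩ := Finite.exists_le fun b => |h b|
  have hbound : ∀ n {x : ℝ}, |x| ≤ C → |ρ ^ n * x| ≤ C := fun n x hx => by
    rw [abs_mul, abs_of_nonneg (pow_nonneg hρ0 n)]
    exact (mul_le_of_le_one_left (abs_nonneg x) (pow_le_one₀ hρ0 hρ1.le)).trans hx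
  have hmeas : ∀ j (f : E → ℝ) (m : ℕ → ℕ), (∀ n, m n ≤ n + j) →
      AEStronglyMeasurable (fun X => ρ ^ τ X * f (X (m (τ X)))) (P ξ) := fun j f m hm =>
    (hτ.dependsOn_comp hN (j := j) fun n => dependsOn_const_mul_apply (ρ ^ n) f (hm n))
      |>.measurable.aestronglyMeasurable
  calc ∫ X, ρ ^ τ X * ∑' j, ρ ^ j * h (X (τ X + j)) ∂P ξ
      = ∫ X, ∑' j, ρ ^ j * (ρ ^ τ X * h (X (τ X + j))) ∂P ξ := by
        congr 1 with X
        rw [← tsum_mul_left]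
        exact tsum_congr fun j => by ring
    _ = ∑' j, ρ ^ j * ∫ X, ρ ^ τ X * h (X (τ X + j)) ∂P ξ :=
        integral_tsum_pow_mul hρ0 hρ1 (fun j => hmeas j h (· + j) fun _ => le_rfl)
          fun j X => hbound _ (hC _)
    _ = ∑' j, ρ ^ j * ∫ X, ρ ^ τ X * ((of S) ^ j *ᵥ h) (X (τ X)) ∂P ξ := by
        congr 1 with j
        rw [hP.integral_stopped_mul_apply_add hS0 hτ ξ (ρ ^ ·) h j]
    _ = ∫ X, ∑' j, ρ ^ j * (ρ ^ τ X * ((of S) ^ j *ᵥ h) (X (τ X))) ∂P ξ :=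
        (integral_tsum_pow_mul hρ0 hρ1 (fun j => hmeas j _ id fun n => n.le_add_right j)
          fun j X => hbound _ (hP.abs_pow_mulVec_le hS0 hC j _)).symm
    _ = ∫ X, ρ ^ τ X * resolvent S ρ h (X (τ X)) ∂P ξ := by
        congr 1 with X
        rw [resolvent, ← tsum_mul_left]
        exact tsum_congr fun j => by ring

lemma integral_tsum_pow_mul_le {ρ : ℝ} (hρ0 : 0 ≤ ρ) (hρ1 : ρ < 1) (ξ : E) {g : E → ℝ}
    (hg : ∀ a, 0 ≤ g a) {M : ℝ} (hM : ∀ a, resolvent S ρ g a ≤ M) :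
    ∫ X, ∑' k, ρ ^ k * g (X k) ∂P ξ ≤
      ∫ X, ∑ k ∈ range (τ X), g (X k) ∂P ξ + M * ∫ X, ρ ^ τ X ∂P ξ := by
  obtain ⟨N, hN⟩ := hτ.exists_forall_le
  obtain ⟨C, hC⟩ := Finite.exists_le fun b => |g b|
  have hstopped : ∀ Φ : ℕ → (ℕ → E) → ℝ, (∀ n, DependsOn (Φ n) (Set.Iic n)) →
      Integrable (fun X => Φ (τ X) X) (P ξ) := fun Φ hΦ =>
    (hτ.dependsOn_comp hN (j := 0) hΦ).integrable
  have hhead := hstopped _ (dependsOn_sum_range_apply fun k a => ρ ^ k * g a)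
  have htotal : Integrable (fun X => ∑' k, ρ ^ k * g (X k)) (P ξ) :=
    integrable_tsum_pow_mul (F := fun k (X : ℕ → E) => g (X k)) hρ0 hρ1
      (fun k => ((measurable_of_finite g).comp (measurable_pi_apply k)).aestronglyMeasurable)
      fun k X => hC (X k)
  have hsplit : ∀ X : ℕ → E, ∑' k, ρ ^ k * g (X k) = ∑ k ∈ range (τ X), ρ ^ k * g (X k) +
      ρ ^ τ X * ∑' j, ρ ^ j * g (X (τ X + j)) := fun X =>
    tsum_pow_mul_eq_sum_range_add hρ0 hρ1 (fun k => hC (X k)) (τ X)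
  have htail : Integrable (fun X => ρ ^ τ X * ∑' j, ρ ^ j * g (X (τ X + j))) (P ξ) :=
    (htotal.sub hhead).congr (ae_of_all _ fun X => by simp only [Pi.sub_apply, hsplit X]; ring)
  have hpow : Integrable (fun X => ρ ^ τ X) (P ξ) :=
    hstopped (fun n _ => ρ ^ n) fun n => (dependsOn_const _).mono (Set.empty_subset _)
  calc ∫ X, ∑' k, ρ ^ k * g (X k) ∂P ξ
      = ∫ X, ∑ k ∈ range (τ X), ρ ^ k * g (X k) ∂P ξ +
          ∫ X, ρ ^ τ X * ∑' j, ρ ^ j * g (X (τ X + j)) ∂P ξ := by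
        rw [← integral_add hhead htail]
        exact congrArg _ (funext hsplit)
    _ ≤ ∫ X, ∑ k ∈ range (τ X), g (X k) ∂P ξ + ∫ X, ρ ^ τ X * M ∂P ξ := by
        rw [hP.integral_stopped_tsum hS0 hτ hρ0 hρ1]
        refine add_le_add ?_ ?_
        · exact integral_mono hhead (hstopped _ (dependsOn_sum_range_apply fun _ => g)) fun X =>
            sum_le_sum fun k _ => mul_le_of_le_one_left (hg _) (pow_le_one₀ hρ0 hρ1.le)
        · exact integral_mono
            (hstopped _ fun n => dependsOn_const_mul_apply (ρ ^ n) (resolvent S ρ g) le_rfl)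
            (hpow.mul_const M) fun X => mul_le_mul_of_nonneg_left (hM _) (pow_nonneg hρ0 _)
    _ = ∫ X, ∑ k ∈ range (τ X), g (X k) ∂P ξ + M * ∫ X, ρ ^ τ X ∂P ξ := by
        rw [integral_mul_const, mul_comm]

end IsChainLaw

end Chain

theorem resolvent_invariant_bound
    {E : Type*} [Fintype E] [Nonempty E] [DecidableEq E]
    [MeasurableSpace E] [MeasurableSingletonClass E]
    (S : E → E → ℝ) (hS0 : ∀ a b, 0 ≤ S a b)
    (ν : E → ℝ) (hν0 : ∀ a, 0 ≤ ν a) (hν1 : ∑ a, ν a = 1)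
    (hinv : ∀ g : E → ℝ, ∑ a, ν a * (∑ b, S a b * g b) = ∑ a, ν a * g a)
    (P : E → Measure (ℕ → E)) (hP : ∀ ξ, IsProbabilityMeasure (P ξ))
    (hPcyl : ∀ (ξ : E) (m : ℕ) (xs : Fin (m + 1) → E),
      P ξ {X | ∀ i : Fin (m + 1), X (i : ℕ) = xs i} =
        ENNReal.ofReal ((if xs 0 = ξ then 1 else 0) *
          ∏ i : Fin m, S (xs i.castSucc) (xs i.succ)))
    (τ : (ℕ → E) → ℕ)
    (hstop : ∀ (X Y : ℕ → E) (n : ℕ), τ X = n → (∀ i ≤ n, X i = Y i) → τ Y = n)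
    (ρ : ℝ) (hρ : ρ ∈ Set.Ioo (0 : ℝ) 1)
    (hhalf : ∀ ξ, ∫ X, ρ ^ τ X ∂P ξ ≤ 1 / 2)
    (g : E → ℝ) (hg : ∀ a, 0 ≤ g a) :
    (1 - ρ)⁻¹ * ∑ a, ν a * g a ≤
      (Finset.univ.sup' Finset.univ_nonempty fun ξ =>
        ∫ X, ∑' k : ℕ, ρ ^ k * g (X k) ∂P ξ) ∧
    (Finset.univ.sup' Finset.univ_nonempty fun ξ =>
        ∫ X, ∑' k : ℕ, ρ ^ k * g (X k) ∂P ξ) ≤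
      2 * Finset.univ.sup' Finset.univ_nonempty fun ξ =>
        ∫ X, ∑ k ∈ Finset.range (τ X), g (X k) ∂P ξ := by
  have := hP
  have hchain : IsChainLaw S P := hPcyl
  obtain ⟨hρ0, hρ1⟩ := hρ
  set G := fun ξ => ∫ X, ∑' k : ℕ, ρ ^ k * g (X k) ∂P ξ
  have hG : ∀ a, G a = resolvent S ρ g a :=
    hchain.integral_tsum_pow_mul_apply hS0 hρ0.le hρ1 g
  refine ⟨?_, ?_⟩
  · calc (1 - ρ)⁻¹ * ∑ a, ν a * g a = ∑ a, ν a * G a := by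
          simp_rw [hG]
          exact (hchain.dotProduct_resolvent hS0 hinv hρ0.le hρ1 g).symm
      _ ≤ univ.sup' univ_nonempty G := sum_mul_le_sup' hν0 hν1 G
  · obtain ⟨ξ₀, -, hξ₀⟩ := exists_mem_eq_sup' univ_nonempty G
    have hG0 : 0 ≤ G ξ₀ :=
      integral_nonneg fun X => tsum_nonneg fun k => mul_nonneg (pow_nonneg hρ0.le k) (hg _)
    have hrenewal := hchain.integral_tsum_pow_mul_le hS0 hstop hρ0.le hρ1 ξ₀ hg
      (M := univ.sup' univ_nonempty G) fun a => hG a ▸ le_sup' G (mem_univ a)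
    have hhead := le_sup' (fun ξ => ∫ X, ∑ k ∈ Finset.range (τ X), g (X k) ∂P ξ) (mem_univ ξ₀)
    rw [hξ₀] at hrenewal ⊢
    nlinarith [hhalf ξ₀]

end ResolventBound
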